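/- Let F be an anti-invariant Riemannian submersion from a Sasakian manifold with (ker F_*)^⊥ = φ(ker F_*) ⊕ span{ξ}. Then ker F_* defines a totally geodesic foliation on M if and only if T_V φW = 0 for all vertical vector fields V, W, where T is the O'Neill tensor. -/

import Mathlib

/-- Algebraic model of a Riemannian submersion `F : (M,g_M) → (N,g_N)`:
`Fn` plays the role of smooth functions on `M`, `VF` of vector fields on `M`,
`g` is the metric, `der` the directional derivative, `nabla` the Levi-Civita
connection, `bracket` the Lie bracket, and `vert`/`horiz` the projections onto
the vertical distribution `ker F_*` and the horizontal distribution
`(ker F_*)^⊥` determined by the fibers of the submersion. -/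
structure RiemannianSubmersionData (Fn VF : Type) [CommRing Fn] [Algebra ℝ Fn]
    [AddCommGroup VF] [Module Fn VF] where
  g : VF → VF → Fn
  g_symm : ∀ X Y, g X Y = g Y X
  g_add_left : ∀ X Y Z, g (X + Y) Z = g X Z + g Y Z
  g_smul_left : ∀ (f : Fn) (X Y : VF), g (f • X) Y = f * g X Y
  g_nondeg : ∀ X, (∀ Y, g X Y = 0) → X = 0
  der : VF → Fn → Fn
  der_add : ∀ X f₁ f₂, der X (f₁ + f₂) = der X f₁ + der X f₂
  der_mul : ∀ X f₁ f₂, der X (f₁ * f₂) = f₁ * der X f₂ + f₂ * der X f₁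
  bracket : VF → VF → VF
  nabla : VF → VF → VF
  nabla_add_left : ∀ X Y Z, nabla (X + Y) Z = nabla X Z + nabla Y Z
  nabla_add_right : ∀ X Y Z, nabla X (Y + Z) = nabla X Y + nabla X Z
  nabla_smul_left : ∀ (f : Fn) (X Y : VF), nabla (f • X) Y = f • nabla X Y
  nabla_smul_right : ∀ (f : Fn) (X Y : VF),
    nabla X (f • Y) = f • nabla X Y + der X f • Y
  torsion_free : ∀ X Y, nabla X Y - nabla Y X = bracket X Y
  compat : ∀ X Y Z, der X (g Y Z) = g (nabla X Y) Z + g Y (nabla X Z)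
  vert : VF → VF
  horiz : VF → VF
  vert_add : ∀ X Y, vert (X + Y) = vert X + vert Y
  vert_smul : ∀ (f : Fn) (X : VF), vert (f • X) = f • vert X
  horiz_add : ∀ X Y, horiz (X + Y) = horiz X + horiz Y
  horiz_smul : ∀ (f : Fn) (X : VF), horiz (f • X) = f • horiz X
  vert_add_horiz : ∀ X, vert X + horiz X = X
  vert_vert : ∀ X, vert (vert X) = vert X
  vert_horiz : ∀ X, vert (horiz X) = 0
  horiz_vert : ∀ X, horiz (vert X) = 0
  g_vert_horiz : ∀ X Y, g (vert X) (horiz Y) = 0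
  vert_bracket : ∀ X Y, vert X = X → vert Y = Y → vert (bracket X Y) = bracket X Y

namespace RiemannianSubmersionData

variable {Fn VF : Type} [CommRing Fn] [Algebra ℝ Fn] [AddCommGroup VF] [Module Fn VF]

/-- O'Neill tensor `T_E F = H∇_{VE}(VF) + V∇_{VE}(HF)`. -/
def T (S : RiemannianSubmersionData Fn VF) (E F : VF) : VF :=
  S.horiz (S.nabla (S.vert E) (S.vert F)) + S.vert (S.nabla (S.vert E) (S.horiz F))

/-- O'Neill tensor `A_E F = V∇_{HE}(HF) + H∇_{HE}(VF)`. -/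
def A (S : RiemannianSubmersionData Fn VF) (E F : VF) : VF :=
  S.vert (S.nabla (S.horiz E) (S.horiz F)) + S.horiz (S.nabla (S.horiz E) (S.vert F))

end RiemannianSubmersionData

/-- A Riemannian submersion from a Sasakian manifold `M(φ,ξ,η,g)` onto a
Riemannian manifold: the total space carries an almost contact metric structure
`(phi, xi, eta, g)` satisfying the Sasakian condition
`(∇_X φ)Y = g(X,Y)ξ - η(Y)X` (and hence `R(ξ,X)Y = g(X,Y)ξ - η(Y)X`). -/
structure SasakianSubmersionData (Fn VF : Type) [CommRing Fn] [Algebra ℝ Fn]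
    [AddCommGroup VF] [Module Fn VF] extends RiemannianSubmersionData Fn VF where
  phi : VF → VF
  xi : VF
  eta : VF → Fn
  phi_add : ∀ X Y, phi (X + Y) = phi X + phi Y
  phi_smul : ∀ (f : Fn) (X : VF), phi (f • X) = f • phi X
  eta_add : ∀ X Y, eta (X + Y) = eta X + eta Y
  eta_smul : ∀ (f : Fn) (X : VF), eta (f • X) = f * eta X
  phi_phi : ∀ X, phi (phi X) = -X + eta X • xi
  phi_xi : phi xi = 0
  eta_phi : ∀ X, eta (phi X) = 0
  eta_xi : eta xi = 1
  g_phi : ∀ X Y, g (phi X) (phi Y) = g X Y - eta X * eta Y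
  eta_g : ∀ X, eta X = g X xi
  sasaki : ∀ X Y, nabla X (phi Y) - phi (nabla X Y) = g X Y • xi - eta Y • X
  curv_xi : ∀ X Y, nabla xi (nabla X Y) - nabla X (nabla xi Y)
      - nabla (bracket xi X) Y = g X Y • xi - eta Y • X

namespace SasakianSubmersionData

variable {Fn VF : Type} [CommRing Fn] [Algebra ℝ Fn] [AddCommGroup VF] [Module Fn VF]

/-- Vertical part `BX` of `φX` for horizontal `X`. -/
def B (S : SasakianSubmersionData Fn VF) (X : VF) : VF := S.vert (S.phi X)

/-- Horizontal (`μ`-)part `CX` of `φX` for horizontal `X`. -/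
def C (S : SasakianSubmersionData Fn VF) (X : VF) : VF := S.horiz (S.phi X)

/-- O'Neill tensor `T`. -/
def T (S : SasakianSubmersionData Fn VF) : VF → VF → VF :=
  S.toRiemannianSubmersionData.T

/-- O'Neill tensor `A`. -/
def A (S : SasakianSubmersionData Fn VF) : VF → VF → VF :=
  S.toRiemannianSubmersionData.A

/-- `F` is anti-invariant: `φ(ker F_*) ⊆ (ker F_*)^⊥`. -/
def AntiInvariant (S : SasakianSubmersionData Fn VF) : Prop :=
  ∀ U, S.vert U = U → S.horiz (S.phi U) = S.phi U

end SasakianSubmersionData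

/-!
For vertical `V, W` the field `φW` is horizontal, so the Sasakian identity
`∇_V φW = φ∇_V W + g(V,W)ξ - η(W)V` reduces `T_V φW` to `V(φ∇_V W)`. If `∇_V W` is
vertical, then `φ∇_V W` is horizontal and this vanishes. Conversely, `V(φ∇_V W) = 0`
makes `∇_V W` orthogonal to `φ(ker F_*)` by skew-symmetry of `φ`, and
`g(∇_V W, ξ) = -g(W, ∇_V ξ) = -g(φW, V) = 0` because `φ∇_V ξ = V`; since `φ(ker F_*)`
and `ξ` span the horizontal distribution, `H∇_V W = 0`.
-/

namespace RiemannianSubmersionData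

variable {Fn VF : Type} [CommRing Fn] [Algebra ℝ Fn] [AddCommGroup VF] [Module Fn VF]
  (S : RiemannianSubmersionData Fn VF) {X Y : VF}

lemma g_add_right (X Y Z : VF) : S.g X (Y + Z) = S.g X Y + S.g X Z := by
  rw [S.g_symm, S.g_add_left, S.g_symm Y, S.g_symm Z]

lemma g_smul_right (f : Fn) (X Y : VF) : S.g X (f • Y) = f * S.g X Y := by
  rw [S.g_symm, S.g_smul_left, S.g_symm]

lemma g_neg_right (X Y : VF) : S.g X (-Y) = -S.g X Y :=
  (AddMonoidHom.mk' (S.g X) (S.g_add_right X)).map_neg Y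

lemma nabla_zero_right (X : VF) : S.nabla X 0 = 0 :=
  (AddMonoidHom.mk' (S.nabla X) (S.nabla_add_right X)).map_zero

lemma der_zero (X : VF) : S.der X 0 = 0 :=
  (AddMonoidHom.mk' (S.der X) (S.der_add X)).map_zero

lemma horiz_zero : S.horiz 0 = 0 :=
  (AddMonoidHom.mk' S.horiz S.horiz_add).map_zero

lemma vert_eq_self_iff : S.vert X = X ↔ S.horiz X = 0 := by
  conv_rhs => rw [← add_eq_left (a := S.vert X), S.vert_add_horiz]
  exact eq_comm

lemma horiz_eq_self_iff : S.horiz X = X ↔ S.vert X = 0 := by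
  conv_rhs => rw [← add_eq_right (b := S.horiz X), S.vert_add_horiz]
  exact eq_comm

lemma horiz_horiz (X : VF) : S.horiz (S.horiz X) = S.horiz X :=
  S.horiz_eq_self_iff.mpr (S.vert_horiz X)

lemma g_eq_zero_of_vert_of_horiz (hX : S.vert X = X) (hY : S.horiz Y = Y) : S.g X Y = 0 := by
  rw [← hX, ← hY, S.g_vert_horiz]

lemma g_eq_zero_of_horiz_of_vert (hX : S.horiz X = X) (hY : S.vert Y = Y) : S.g X Y = 0 := by
  rw [S.g_symm, S.g_eq_zero_of_vert_of_horiz hY hX]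

lemma horiz_eq_zero_of_forall_g_horiz (h : ∀ Y, S.g X (S.horiz Y) = 0) : S.horiz X = 0 := by
  refine S.g_nondeg _ fun Y => ?_
  have hXY : S.g (S.horiz X) (S.horiz Y) = S.g X (S.horiz Y) := by
    conv_rhs => rw [← S.vert_add_horiz X]
    rw [S.g_add_left, S.g_vert_horiz, zero_add]
  rw [← S.vert_add_horiz Y, S.g_add_right, hXY, h, S.g_symm, S.g_vert_horiz, add_zero]

end RiemannianSubmersionData

namespace SasakianSubmersionData

variable {Fn VF : Type} [CommRing Fn] [Algebra ℝ Fn] [AddCommGroup VF] [Module Fn VF]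
  (S : SasakianSubmersionData Fn VF) {V W X Y : VF}

lemma g_eq_g_phi_phi (hX : S.eta X = 0) : S.g X Y = S.g (S.phi X) (S.phi Y) := by
  rw [S.g_phi, hX, zero_mul, sub_zero]

lemma g_phi_right (X Y : VF) : S.g X (S.phi Y) = -S.g (S.phi X) Y := by
  have h := S.g_phi X (S.phi Y)
  rw [S.eta_phi, mul_zero, sub_zero, S.phi_phi, S.g_add_right, S.g_neg_right, S.g_smul_right,
    ← S.eta_g, S.eta_phi, mul_zero, add_zero] at h
  exact h.symm

lemma phi_nabla_xi (X : VF) : S.phi (S.nabla X S.xi) = X - S.eta X • S.xi := by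
  have h := S.sasaki X S.xi
  rw [S.phi_xi, S.nabla_zero_right, S.eta_xi, one_smul, ← S.eta_g] at h
  rw [← neg_sub, ← h, zero_sub, neg_neg]

def HorizSpannedByPhiVertAndXi : Prop :=
  ∀ X, S.horiz X = X → ∃ (U : VF) (c : Fn), S.vert U = U ∧ X = S.phi U + c • S.xi

section

variable {S} (hxi : S.horiz S.xi = S.xi)
include hxi

lemma vert_xi : S.vert S.xi = 0 :=
  S.horiz_eq_self_iff.mp hxi

lemma eta_eq_zero_of_vert (hV : S.vert V = V) : S.eta V = 0 := by
  rw [S.eta_g, S.g_eq_zero_of_vert_of_horiz hV hxi]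

variable (hanti : S.AntiInvariant)
include hanti

lemma T_phi_eq_vert_phi_nabla (hV : S.vert V = V) (hW : S.vert W = W) :
    S.T V (S.phi W) = S.vert (S.phi (S.nabla V W)) := by
  have hφW := hanti W hW
  have hsasaki :
      S.nabla V (S.phi W) = S.phi (S.nabla V W) + (S.g V W • S.xi - S.eta W • V) := by
    rw [← S.sasaki, add_sub_cancel]
  show S.horiz (S.nabla (S.vert V) (S.vert (S.phi W))) +
      S.vert (S.nabla (S.vert V) (S.horiz (S.phi W))) = _
  rw [hV, S.horiz_eq_self_iff.mp hφW, S.nabla_zero_right, S.horiz_zero, zero_add, hφW, hsasaki,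
    eta_eq_zero_of_vert hxi hW, zero_smul, sub_zero, S.vert_add, S.vert_smul, vert_xi hxi,
    smul_zero, add_zero]

lemma g_nabla_xi_eq_zero (hV : S.vert V = V) (hW : S.vert W = W) :
    S.g (S.nabla V W) S.xi = 0 := by
  have hWξ : S.g W (S.nabla V S.xi) = 0 := by
    rw [S.g_eq_g_phi_phi (eta_eq_zero_of_vert hxi hW), S.phi_nabla_xi,
      eta_eq_zero_of_vert hxi hV, zero_smul, sub_zero,
      S.g_eq_zero_of_horiz_of_vert (hanti W hW) hV]
  have h := S.compat V W S.xi
  rwa [S.g_eq_zero_of_vert_of_horiz hW hxi, S.der_zero, hWξ, add_zero, eq_comm] at h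

end

lemma horiz_eq_zero_of_vert_phi_eq_zero
    (hspan : S.HorizSpannedByPhiVertAndXi)
    (hφX : S.vert (S.phi X) = 0) (hXξ : S.g X S.xi = 0) : S.horiz X = 0 := by
  refine S.horiz_eq_zero_of_forall_g_horiz fun Y => ?_
  obtain ⟨U, c, hU, hY⟩ := hspan _ (S.horiz_horiz Y)
  rw [hY, S.g_add_right, S.g_smul_right, hXξ, mul_zero, add_zero, S.g_phi_right,
    S.g_eq_zero_of_horiz_of_vert (S.horiz_eq_self_iff.mpr hφX) hU, neg_zero]

lemma T_phi_eq_zero_iff (hxi : S.horiz S.xi = S.xi) (hanti : S.AntiInvariant)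
    (hspan : S.HorizSpannedByPhiVertAndXi)
    (hV : S.vert V = V) (hW : S.vert W = W) :
    S.T V (S.phi W) = 0 ↔ S.vert (S.nabla V W) = S.nabla V W := by
  rw [T_phi_eq_vert_phi_nabla hxi hanti hV hW, S.vert_eq_self_iff]
  exact ⟨fun h => S.horiz_eq_zero_of_vert_phi_eq_zero hspan h
      (g_nabla_xi_eq_zero hxi hanti hV hW),
    fun h => S.horiz_eq_self_iff.mp (hanti _ (S.vert_eq_self_iff.mpr h))⟩

end SasakianSubmersionData

open SasakianSubmersionData in
/-- Corollary 3: for an anti-invariant Riemannian submersion from a Sasakian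
manifold with `(ker F_*)^⊥ = φ(ker F_*) ⊕ span{ξ}`, the vertical distribution
`ker F_*` defines a totally geodesic foliation on `M` iff `T_V φW = 0` for all
vertical `V, W`. -/
theorem vertical_totally_geodesic_iff {Fn VF : Type} [CommRing Fn]
    [Algebra ℝ Fn] [AddCommGroup VF] [Module Fn VF]
    (S : SasakianSubmersionData Fn VF)
    (hxi : S.horiz S.xi = S.xi)
    (hanti : S.AntiInvariant)
    (hspan : ∀ X, S.horiz X = X →
      ∃ (U : VF) (c : Fn), S.vert U = U ∧ X = S.phi U + c • S.xi) :
    (∀ V W, S.vert V = V → S.vert W = W →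
        S.vert (S.nabla V W) = S.nabla V W) ↔
      (∀ V W, S.vert V = V → S.vert W = W → S.T V (S.phi W) = 0) :=
  forall₂_congr fun _ _ => forall₂_congr fun hV hW =>
    (S.T_phi_eq_zero_iff hxi hanti hspan hV hW).symm
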